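/- Inexact linear minimization with KWSA gradient estimates: suppose F : ℝ^d → ℝ is differentiable with L-Lipschitz gradient, C is a nonempty compact convex subset of ℝ^d with ‖u‖ ≤ R for every u ∈ C, and c > 0. Then for every x ∈ ℝ^d, min_{v ∈ C} ⟨v, g_c(F)(x)⟩ ≤ min_{s ∈ C} ⟨s, ∇F(x)⟩ + cLRd/2. -/

import Mathlib

open scoped RealInnerProductSpace BigOperators

/-- The KWSA (Kiefer–Wolfowitz) gradient estimate of `F` at `x` with smoothing
parameter `c`: `g_c(F)(x) = ∑ i, ((F(x + c·e_i) − F(x))/c)·e_i`. -/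
noncomputable def kwsa (d : ℕ) (F : EuclideanSpace ℝ (Fin d) → ℝ) (c : ℝ)
    (x : EuclideanSpace ℝ (Fin d)) : EuclideanSpace ℝ (Fin d) :=
  ∑ i : Fin d, ((F (x + c • EuclideanSpace.single i (1 : ℝ)) - F x) / c) •
    EuclideanSpace.single i (1 : ℝ)


/-!
Each coordinate of the KWSA estimate is a forward difference quotient along `e_i`. By the
descent lemma, `|F (x + c e_i) - F x - c ∂_i F x| ≤ L c² / 2`, so every coordinate of
`g_c(F)(x) - ∇F(x)` is at most `L c / 2` in absolute value. Pairing with `v ∈ C`, where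
`|v_i| ≤ ‖v‖ ≤ R`, gives `⟪v, g_c(F)(x)⟫ ≤ ⟪v, ∇F(x)⟫ + c L R d / 2` pointwise on `C`, and
the pointwise bound passes to the infima.
-/

open Set

section Descent

variable {E : Type*} [NormedAddCommGroup E] [InnerProductSpace ℝ E] [CompleteSpace E]
  {F : E → ℝ} {L : ℝ}

theorem hasDerivAt_apply_add_smul (hF : Differentiable ℝ F) (x h : E) (t : ℝ) :
    HasDerivAt (fun s : ℝ => F (x + s • h)) ⟪gradient F (x + t • h), h⟫ t := by
  have hline : HasDerivAt (fun s : ℝ => x + s • h) h t := by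
    simpa using ((hasDerivAt_id t).smul_const h).const_add x
  simpa [InnerProductSpace.toDual_apply_apply, Function.comp_def] using
    (hF (x + t • h)).hasGradientAt.hasFDerivAt.comp_hasDerivAt t hline

theorem abs_sub_sub_inner_gradient_le (hF : Differentiable ℝ F)
    (hlip : ∀ u w, ‖gradient F u - gradient F w‖ ≤ L * ‖u - w‖) (x h : E) :
    |F (x + h) - F x - ⟪gradient F x, h⟫| ≤ L * ‖h‖ ^ 2 / 2 := by
  set φ : ℝ → ℝ := fun t => F (x + t • h) - F x - t * ⟪gradient F x, h⟫
  have hφ (t : ℝ) : HasDerivAt φ ⟪gradient F (x + t • h) - gradient F x, h⟫ t := by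
    rw [inner_sub_left]
    exact ((hasDerivAt_apply_add_smul hF x h t).sub_const (F x)).sub
      (by simpa using (hasDerivAt_id t).mul_const ⟪gradient F x, h⟫)
  have hB (t : ℝ) : HasDerivAt (fun t : ℝ => L * ‖h‖ ^ 2 / 2 * t ^ 2) (L * ‖h‖ ^ 2 * t) t := by
    refine ((hasDerivAt_pow 2 t).const_mul (L * ‖h‖ ^ 2 / 2)).congr_deriv ?_
    ring
  have hφ'_le (t : ℝ) (ht : t ∈ Ico (0 : ℝ) 1) :
      ‖⟪gradient F (x + t • h) - gradient F x, h⟫‖ ≤ L * ‖h‖ ^ 2 * t := by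
    calc ‖⟪gradient F (x + t • h) - gradient F x, h⟫‖
        ≤ ‖gradient F (x + t • h) - gradient F x‖ * ‖h‖ := norm_inner_le_norm _ _
      _ ≤ L * ‖x + t • h - x‖ * ‖h‖ := by gcongr; exact hlip _ _
      _ = L * ‖h‖ ^ 2 * t := by
        rw [add_sub_cancel_left, norm_smul, Real.norm_of_nonneg ht.1]
        ring
  -- `φ 0 = 0` and `|φ'| ≤ (L ‖h‖² t² / 2)'` on `[0, 1)`, so `|φ| ≤ L ‖h‖² t² / 2` there.
  have hφ_le := image_norm_le_of_norm_deriv_right_le_deriv_boundary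
    (fun t _ => (hφ t).continuousAt.continuousWithinAt) (fun t _ => (hφ t).hasDerivWithinAt)
    (by simp [φ]) hB hφ'_le (right_mem_Icc.mpr zero_le_one)
  simpa [φ] using hφ_le

theorem abs_slope_sub_inner_gradient_le (hF : Differentiable ℝ F)
    (hlip : ∀ u w, ‖gradient F u - gradient F w‖ ≤ L * ‖u - w‖) (x e : E) {c : ℝ}
    (hc : 0 < c) :
    |(F (x + c • e) - F x) / c - ⟪gradient F x, e⟫| ≤ L * c * ‖e‖ ^ 2 / 2 := by
  have h := abs_sub_sub_inner_gradient_le hF hlip x (c • e)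
  rw [real_inner_smul_right, norm_smul, Real.norm_of_nonneg hc.le] at h
  rw [div_sub' hc.ne', abs_div, abs_of_pos hc, div_le_iff₀ hc]
  linarith

end Descent

theorem abs_inner_le_card_mul_of_abs_apply_le {ι : Type*} [Fintype ι]
    {v w : EuclideanSpace ℝ ι} {R ε : ℝ} (hv : ‖v‖ ≤ R) (hw : ∀ i, |w i| ≤ ε) :
    |⟪v, w⟫| ≤ Fintype.card ι * R * ε := by
  rw [PiLp.inner_apply]
  calc |∑ i, ⟪v i, w i⟫| ≤ ∑ i, |v i| * |w i| := by
        refine (Finset.abs_sum_le_sum_abs _ _).trans_eq (Finset.sum_congr rfl fun i _ => ?_)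
        rw [Real.inner_apply, abs_mul]
    _ ≤ ∑ _i : ι, R * ε := by
        refine Finset.sum_le_sum fun i _ => mul_le_mul ?_ (hw i) (abs_nonneg _)
          ((norm_nonneg v).trans hv)
        exact (Real.norm_eq_abs (v i) ▸ PiLp.norm_apply_le v i).trans hv
    _ = Fintype.card ι * R * ε := by
        rw [Finset.sum_const, Finset.card_univ, nsmul_eq_mul, mul_assoc]

section Kwsa

variable {d : ℕ} {F : EuclideanSpace ℝ (Fin d) → ℝ} {c : ℝ}

theorem kwsa_apply (x : EuclideanSpace ℝ (Fin d)) (i : Fin d) :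
    kwsa d F c x i = (F (x + c • EuclideanSpace.single i (1 : ℝ)) - F x) / c := by
  simp [kwsa, Pi.single_apply]

theorem abs_kwsa_sub_gradient_apply_le (hF : Differentiable ℝ F) {L : ℝ}
    (hlip : ∀ u w, ‖gradient F u - gradient F w‖ ≤ L * ‖u - w‖) (hc : 0 < c)
    (x : EuclideanSpace ℝ (Fin d)) (i : Fin d) :
    |(kwsa d F c x - gradient F x) i| ≤ L * c / 2 := by
  have h := abs_slope_sub_inner_gradient_le hF hlip x (EuclideanSpace.single i (1 : ℝ)) hc
  rwa [EuclideanSpace.inner_single_right, PiLp.norm_single, norm_one, one_pow,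
    mul_one, one_mul, conj_trivial, ← kwsa_apply, ← PiLp.sub_apply] at h

theorem inner_kwsa_le (hF : Differentiable ℝ F) {L : ℝ}
    (hlip : ∀ u w, ‖gradient F u - gradient F w‖ ≤ L * ‖u - w‖) (hc : 0 < c)
    (x : EuclideanSpace ℝ (Fin d)) {v : EuclideanSpace ℝ (Fin d)} {R : ℝ} (hv : ‖v‖ ≤ R) :
    ⟪v, kwsa d F c x⟫ ≤ ⟪v, gradient F x⟫ + c * L * R * d / 2 := by
  have h := abs_inner_le_card_mul_of_abs_apply_le hv
    (abs_kwsa_sub_gradient_apply_le hF hlip hc x)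
  rw [inner_sub_right, Fintype.card_fin] at h
  linarith [le_abs_self (⟪v, kwsa d F c x⟫ - ⟪v, gradient F x⟫)]

end Kwsa

theorem csInf_image_le_csInf_image_add {α : Type*} {s : Set α} {f g : α → ℝ} {δ : ℝ}
    (hs : s.Nonempty) (hf : BddBelow (f '' s)) (hfg : ∀ a ∈ s, f a ≤ g a + δ) :
    sInf (f '' s) ≤ sInf (g '' s) + δ := by
  rw [← sub_le_iff_le_add]
  refine le_csInf (hs.image g) ?_
  rintro _ ⟨a, ha, rfl⟩
  linarith [csInf_le hf ⟨a, ha, rfl⟩, hfg a ha]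

theorem kwsa_inexact_linear_minimization_general
    (d : ℕ)
    (F : EuclideanSpace ℝ (Fin d) → ℝ)
    (hFdiff : Differentiable ℝ F)
    (L : ℝ)
    (hFlip : ∀ u w, ‖gradient F u - gradient F w‖ ≤ L * ‖u - w‖)
    (C : Set (EuclideanSpace ℝ (Fin d)))
    (hCne : C.Nonempty) (hCcomp : IsCompact C)
    (R : ℝ) (hbound : ∀ u ∈ C, ‖u‖ ≤ R)
    (c : ℝ) (hc : 0 < c)
    (x : EuclideanSpace ℝ (Fin d)) :
    sInf ((fun v => ⟪v, kwsa d F c x⟫) '' C) ≤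
      sInf ((fun s => ⟪s, gradient F x⟫) '' C) + c * L * R * d / 2 :=
  csInf_image_le_csInf_image_add hCne
    (hCcomp.image (continuous_id.inner continuous_const)).bddBelow
    fun v hv => inner_kwsa_le hFdiff hFlip hc x (hbound v hv)

theorem kwsa_inexact_linear_minimization
    (d : ℕ) (hd : 1 ≤ d)
    (F : EuclideanSpace ℝ (Fin d) → ℝ)
    (hFdiff : Differentiable ℝ F)
    (L : ℝ) (hL : 0 < L)
    (hFlip : ∀ u w, ‖gradient F u - gradient F w‖ ≤ L * ‖u - w‖)
    (C : Set (EuclideanSpace ℝ (Fin d)))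
    (hCne : C.Nonempty) (hCcomp : IsCompact C) (hCconv : Convex ℝ C)
    (R : ℝ) (hR : 0 < R) (hbound : ∀ u ∈ C, ‖u‖ ≤ R)
    (c : ℝ) (hc : 0 < c)
    (x : EuclideanSpace ℝ (Fin d)) :
    sInf ((fun v => ⟪v, kwsa d F c x⟫) '' C) ≤
      sInf ((fun s => ⟪s, gradient F x⟫) '' C) + c * L * R * d / 2 :=
  kwsa_inexact_linear_minimization_general d F hFdiff L hFlip C hCne hCcomp R hbound c hc x
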